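/- Let M_k and M_{k+d} be maximum-weight matchings of cardinalities k and k+d in K_{n,n} with real weights. Then there exist d pairwise vertex-disjoint augmenting paths p_1, ..., p_d of M_{k+d} with respect to M_k such that M_k △ p_1 △ ··· △ p_d is a maximum-weight matching of cardinality k+d (i.e., has the same total weight as M_{k+d}). -/

import Mathlib

def IsMatching (n : ℕ) (M : Finset (Fin n × Fin n)) : Prop :=
  ∀ e ∈ M, ∀ f ∈ M, e ≠ f → e.1 ≠ f.1 ∧ e.2 ≠ f.2

noncomputable def wSum (n : ℕ) (w : Fin n → Fin n → ℝ) (S : Finset (Fin n × Fin n)) : ℝ :=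
  ∑ e ∈ S, w e.1 e.2

noncomputable def maxAssign (n : ℕ) (w : Fin n → Fin n → ℝ) (k : ℕ) : ℝ :=
  sSup {x : ℝ | ∃ M : Finset (Fin n × Fin n), IsMatching n M ∧ M.card = k ∧ wSum n w M = x}

def IsAugmentingPath (n : ℕ) (M p : Finset (Fin n × Fin n)) : Prop :=
  ∃ (t : ℕ) (u v : ℕ → Fin n),
    (∀ i ≤ t, ∀ j ≤ t, u i = u j → i = j) ∧
    (∀ i ≤ t, ∀ j ≤ t, v i = v j → i = j) ∧
    (∀ i ≤ t, (u i, v i) ∉ M) ∧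
    (∀ i < t, (u (i + 1), v i) ∈ M) ∧
    (∀ e ∈ M, e.1 ≠ u 0) ∧
    (∀ e ∈ M, e.2 ≠ v t) ∧
    p = ((Finset.range (t + 1)).image fun i => (u i, v i)) ∪
        ((Finset.range t).image fun i => (u (i + 1), v i))
def applyPaths (n : ℕ) (M : Finset (Fin n × Fin n)) (p : ℕ → Finset (Fin n × Fin n)) :
    ℕ → Finset (Fin n × Fin n)
  | 0 => M
  | (i + 1) => symmDiff (applyPaths n M p i) (p i)

/-!
Induct on `|M_k △ N|` over all matchings `N` with `|N| = k + d`, proving that the paths yield a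
matching at least as heavy as `N`; for `N = M_{k+d}` optimality turns this into equality.
The edges of `M_k △ N` form vertex-disjoint alternating paths and cycles. Follow the alternating
path from a left vertex covered by `N` but not by `M_k`; it is a whole component `P` of
`M_k △ N` and either
* ends on the right, so that `P` is an augmenting path of `M_k`: then `N △ P` has `k + d - 1`
  edges, the induction hypothesis gives `d - 1` paths away from `P`, and adding `P` loses no
  weight since `w(R △ P) - w(R) = w(N) - w(N △ P)` for every matching `R` agreeing with `M_k`
  on `P`;
* or ends on the left with as many edges in `M_k` as in `N`: then `M_k △ P` is a
  `k`-matching, so by optimality of `M_k` the `(k + d)`-matching `N △ P` is at least as heavy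
  as `N`, and the induction hypothesis applies to it.
-/

open Finset
open scoped symmDiff

namespace Finset

variable {α β : Type*} [DecidableEq α] [AddCommMonoid β]

theorem sum_symmDiff_add_sum_inter (s t : Finset α) (f : α → β) :
    ∑ x ∈ s ∆ t, f x + ∑ x ∈ s ∩ t, f x = ∑ x ∈ s, f x + ∑ x ∈ t \ s, f x := by
  rw [Finset.symmDiff_def, sum_union disjoint_sdiff_sdiff, add_right_comm,
    ← sum_union (disjoint_sdiff_inter s t), sdiff_union_inter]

theorem sum_symmDiff_exchange {M N R P : Finset α} (hP : P ⊆ M ∆ N)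
    (hR : ∀ x ∈ P, x ∈ R ↔ x ∈ M) (f : α → β) :
    ∑ x ∈ R ∆ P, f x + ∑ x ∈ P ∩ M, f x = ∑ x ∈ R, f x + ∑ x ∈ P ∩ N, f x := by
  have hRP : R ∩ P = P ∩ M := by
    ext x
    have := hR x
    simp only [mem_inter]
    tauto
  have hPR : P \ R = P ∩ N := by
    ext x
    have := hR x
    have := @hP x
    simp only [mem_sdiff, mem_inter, mem_symmDiff] at *
    tauto
  rw [← hRP, ← hPR, sum_symmDiff_add_sum_inter]

theorem card_symmDiff_exchange {M N R P : Finset α} (hP : P ⊆ M ∆ N)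
    (hR : ∀ x ∈ P, x ∈ R ↔ x ∈ M) : #(R ∆ P) + #(P ∩ M) = #R + #(P ∩ N) := by
  simpa only [card_eq_sum_ones] using sum_symmDiff_exchange hP hR (fun _ => (1 : ℕ))

theorem union_inter_of_subset_sdiff {s t F B : Finset α}
    (hF : F ⊆ t \ s) (hB : B ⊆ s \ t) : (F ∪ B) ∩ t = F := by
  ext x
  have := @hF x
  have := @hB x
  simp only [mem_union, mem_inter, mem_sdiff] at *
  tauto

end Finset

def IsUnionOfComponents {α β : Type*} (D P : Finset (α × β)) : Prop :=
  P ⊆ D ∧ ∀ e ∈ D, ∀ f ∈ P, e.1 = f.1 ∨ e.2 = f.2 → e ∈ P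

namespace IsUnionOfComponents

variable {α β : Type*} [DecidableEq α] [DecidableEq β] {D P Q : Finset (α × β)}

theorem symmDiff_comm {M N : Finset (α × β)} (hP : IsUnionOfComponents (M ∆ N) P) :
    IsUnionOfComponents (N ∆ M) P := by
  rwa [_root_.symmDiff_comm]

theorem disjoint_image_fst (hP : IsUnionOfComponents D P) (hQ : Q ⊆ D \ P) :
    Disjoint (Q.image Prod.fst) (P.image Prod.fst) := by
  rw [disjoint_left]
  rintro _ hx hx'
  obtain ⟨e, he, rfl⟩ := mem_image.1 hx
  obtain ⟨f, hf, hfe⟩ := mem_image.1 hx'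
  have he' := mem_sdiff.1 (hQ he)
  exact he'.2 (hP.2 e he'.1 f hf (.inl hfe.symm))

theorem disjoint_image_snd (hP : IsUnionOfComponents D P) (hQ : Q ⊆ D \ P) :
    Disjoint (Q.image Prod.snd) (P.image Prod.snd) := by
  rw [disjoint_left]
  rintro _ hx hx'
  obtain ⟨e, he, rfl⟩ := mem_image.1 hx
  obtain ⟨f, hf, hfe⟩ := mem_image.1 hx'
  have he' := mem_sdiff.1 (hQ he)
  exact he'.2 (hP.2 e he'.1 f hf (.inr hfe.symm))

theorem symmDiff_symmDiff {M N : Finset (α × β)} (hP : IsUnionOfComponents (M ∆ N) P) :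
    M ∆ (N ∆ P) = M ∆ N \ P := by
  rw [← symmDiff_assoc, symmDiff_of_ge hP.1]

end IsUnionOfComponents

section Matching

variable {n : ℕ} {M N R P : Finset (Fin n × Fin n)}

theorem isMatching_iff :
    IsMatching n M ↔ ∀ e ∈ M, ∀ f ∈ M, e.1 = f.1 ∨ e.2 = f.2 → e = f := by
  refine ⟨fun h e he f hf hef => ?_, fun h e he f hf hne => ?_⟩
  · by_contra hne
    have := h e he f hf hne
    tauto
  · exact ⟨fun h1 => hne (h e he f hf (.inl h1)), fun h2 => hne (h e he f hf (.inr h2))⟩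

theorem IsMatching.eq_of_fst_eq (hM : IsMatching n M) {e f : Fin n × Fin n} (he : e ∈ M)
    (hf : f ∈ M) (h : e.1 = f.1) : e = f :=
  isMatching_iff.1 hM e he f hf (.inl h)

theorem IsMatching.eq_of_snd_eq (hM : IsMatching n M) {e f : Fin n × Fin n} (he : e ∈ M)
    (hf : f ∈ M) (h : e.2 = f.2) : e = f :=
  isMatching_iff.1 hM e he f hf (.inr h)

theorem IsUnionOfComponents.isMatching_symmDiff (hP : IsUnionOfComponents (M ∆ N) P)
    (hN : IsMatching n N) (hR : IsMatching n R) (hRMN : R ⊆ M ∪ N)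
    (hRP : ∀ x ∈ P, x ∈ R ↔ x ∈ M) : IsMatching n (R ∆ P) := by
  rw [isMatching_iff] at hN hR ⊢
  have hPN : ∀ f ∈ P, f ∉ R → f ∈ N := fun f hf hfR => by
    have := mem_symmDiff.1 (hP.1 hf)
    have := hRP f hf
    tauto
  have key : ∀ e ∈ R, e ∉ P → ∀ f ∈ P, f ∉ R → ¬(e.1 = f.1 ∨ e.2 = f.2) := by
    intro e heR heP f hfP hfR hef
    by_cases heN : e ∈ N
    · exact heP (hN e heN f (hPN f hfP hfR) hef ▸ hfP)
    · have heM : e ∈ M := (mem_union.1 (hRMN heR)).resolve_right heN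
      exact heP (hP.2 e (mem_symmDiff.2 (.inl ⟨heM, heN⟩)) f hfP hef)
  intro e he f hf hef
  rcases mem_symmDiff.1 he with ⟨heR, heP⟩ | ⟨heP, heR⟩ <;>
    rcases mem_symmDiff.1 hf with ⟨hfR, hfP⟩ | ⟨hfP, hfR⟩
  · exact hR e heR f hfR hef
  · exact absurd hef (key e heR heP f hfP hfR)
  · exact absurd (hef.imp Eq.symm Eq.symm) (key f hfR hfP e heP heR)
  · exact hN e (hPN e heP heR) f (hPN f hfP hfR) hef

theorem wSum_symmDiff_exchange (w : Fin n → Fin n → ℝ) (hP : P ⊆ M ∆ N)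
    (hR : ∀ x ∈ P, x ∈ R ↔ x ∈ M) :
    wSum n w (R ∆ P) + wSum n w (P ∩ M) = wSum n w R + wSum n w (P ∩ N) :=
  sum_symmDiff_exchange hP hR _

end Matching

section Paths

variable {n : ℕ} {M P S : Finset (Fin n × Fin n)} {p q : ℕ → Finset (Fin n × Fin n)}

theorem applyPaths_congr {m : ℕ} (h : ∀ i < m, p i = q i) :
    applyPaths n M p m = applyPaths n M q m := by
  induction m with
  | zero => rfl
  | succ m ih => rw [applyPaths, applyPaths, ih fun i hi => h i (by omega), h m (by omega)]

theorem applyPaths_update (e : ℕ) :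
    applyPaths n M (Function.update q e P) (e + 1) = applyPaths n M q e ∆ P := by
  rw [applyPaths, applyPaths_congr fun i hi => Function.update_of_ne hi.ne _ _,
    Function.update_self]

theorem symmDiff_applyPaths_subset {m : ℕ} (hp : ∀ i < m, p i ⊆ S) :
    M ∆ applyPaths n M p m ⊆ S := by
  induction m with
  | zero => simp [applyPaths]
  | succ m ih =>
    rw [applyPaths, ← symmDiff_assoc]
    exact symmDiff_subset_union.trans
      (union_subset (ih fun i hi => hp i (by omega)) (hp m (by omega)))

structure IsDisjointAugmentingPaths (n : ℕ) (M S : Finset (Fin n × Fin n)) (d : ℕ)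
    (p : ℕ → Finset (Fin n × Fin n)) : Prop where
  isAugmentingPath : ∀ i < d, IsAugmentingPath n M (p i)
  subset : ∀ i < d, p i ⊆ S
  disjoint : ∀ i < d, ∀ j < d, i ≠ j →
    Disjoint ((p i).image Prod.fst) ((p j).image Prod.fst) ∧
    Disjoint ((p i).image Prod.snd) ((p j).image Prod.snd)

theorem IsDisjointAugmentingPaths.mono {T : Finset (Fin n × Fin n)} {d : ℕ}
    (hp : IsDisjointAugmentingPaths n M S d p) (hST : S ⊆ T) :
    IsDisjointAugmentingPaths n M T d p :=
  ⟨hp.isAugmentingPath, fun i hi => (hp.subset i hi).trans hST, hp.disjoint⟩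

theorem IsDisjointAugmentingPaths.update {e : ℕ}
    (hq : IsDisjointAugmentingPaths n M (S \ P) e q) (hPaug : IsAugmentingPath n M P)
    (hP : IsUnionOfComponents S P) :
    IsDisjointAugmentingPaths n M S (e + 1) (Function.update q e P) := by
  have hcases : ∀ i < e + 1, i < e ∧ Function.update q e P i = q i ∨
      i = e ∧ Function.update q e P i = P := fun i hi => by
    rcases Nat.lt_succ_iff_lt_or_eq.1 hi with hi | rfl
    · exact .inl ⟨hi, Function.update_of_ne hi.ne _ _⟩
    · exact .inr ⟨rfl, Function.update_self _ _ _⟩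
  have hqP : ∀ i < e, Disjoint ((q i).image Prod.fst) (P.image Prod.fst) ∧
      Disjoint ((q i).image Prod.snd) (P.image Prod.snd) := fun i hi =>
    ⟨hP.disjoint_image_fst (hq.subset i hi), hP.disjoint_image_snd (hq.subset i hi)⟩
  refine ⟨fun i hi => ?_, fun i hi => ?_, fun i hi j hj hij => ?_⟩
  · rcases hcases i hi with ⟨hi, h⟩ | ⟨-, h⟩ <;> rw [h]
    exacts [hq.isAugmentingPath i hi, hPaug]
  · rcases hcases i hi with ⟨hi, h⟩ | ⟨-, h⟩ <;> rw [h]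
    exacts [(hq.subset i hi).trans sdiff_subset, hP.1]
  · rcases hcases i hi with ⟨hi, hi'⟩ | ⟨rfl, hi'⟩ <;>
      rcases hcases j hj with ⟨hj, hj'⟩ | ⟨rfl, hj'⟩ <;> simp only [hi', hj']
    · exact hq.disjoint i hi j hj hij
    · exact hqP i hi
    · exact ⟨(hqP j hj).1.symm, (hqP j hj).2.symm⟩
    · exact absurd rfl hij

end Paths

section Exchange

variable {n : ℕ} {w : Fin n → Fin n → ℝ} {M N P : Finset (Fin n × Fin n)}

theorem IsUnionOfComponents.isMatching_symmDiff_left (hP : IsUnionOfComponents (M ∆ N) P)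
    (hM : IsMatching n M) (hN : IsMatching n N) : IsMatching n (M ∆ P) :=
  hP.isMatching_symmDiff hN hM subset_union_left fun _ _ => Iff.rfl

theorem IsUnionOfComponents.isMatching_symmDiff_right (hP : IsUnionOfComponents (M ∆ N) P)
    (hM : IsMatching n M) (hN : IsMatching n N) : IsMatching n (N ∆ P) :=
  hP.symmDiff_comm.isMatching_symmDiff hM hN subset_union_left fun _ _ => Iff.rfl

theorem IsUnionOfComponents.exchange_balanced (hP : IsUnionOfComponents (M ∆ N) P)
    (hM : IsMatching n M) (hN : IsMatching n N)
    (hopt : ∀ N', IsMatching n N' → #N' = #M → wSum n w N' ≤ wSum n w M)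
    (hbal : #(P ∩ N) = #(P ∩ M)) :
    IsMatching n (N ∆ P) ∧ #(N ∆ P) = #N ∧ wSum n w N ≤ wSum n w (N ∆ P) := by
  have hcardM := card_symmDiff_exchange hP.1 (R := M) fun _ _ => Iff.rfl
  have hcardN := card_symmDiff_exchange hP.symmDiff_comm.1 (R := N) fun _ _ => Iff.rfl
  have hwM := wSum_symmDiff_exchange w hP.1 (R := M) fun _ _ => Iff.rfl
  have hwN := wSum_symmDiff_exchange w hP.symmDiff_comm.1 (R := N) fun _ _ => Iff.rfl
  have hle := hopt _ (hP.isMatching_symmDiff_left hM hN) (by omega)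
  exact ⟨hP.isMatching_symmDiff_right hM hN, by omega, by linarith⟩

theorem IsUnionOfComponents.exchange_augmenting {e : ℕ} {q : ℕ → Finset (Fin n × Fin n)}
    (hP : IsUnionOfComponents (M ∆ N) P) (hN : IsMatching n N)
    (hPaug : IsAugmentingPath n M P)
    (hq : IsDisjointAugmentingPaths n M (M ∆ N \ P) e q)
    (hR : IsMatching n (applyPaths n M q e)) (hRcard : #(applyPaths n M q e) = #M + e)
    (hRw : wSum n w (N ∆ P) ≤ wSum n w (applyPaths n M q e))
    (hPcard : #(P ∩ N) = #(P ∩ M) + 1) :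
    IsDisjointAugmentingPaths n M (M ∆ N) (e + 1) (Function.update q e P) ∧
      IsMatching n (applyPaths n M (Function.update q e P) (e + 1)) ∧
      #(applyPaths n M (Function.update q e P) (e + 1)) = #M + (e + 1) ∧
      wSum n w N ≤ wSum n w (applyPaths n M (Function.update q e P) (e + 1)) := by
  rw [applyPaths_update]
  set R := applyPaths n M q e
  have hMR : M ∆ R ⊆ M ∆ N \ P := symmDiff_applyPaths_subset hq.subset
  have hRMN : R ⊆ M ∪ N := fun x hx => by
    by_cases hxM : x ∈ M
    · exact mem_union_left _ hxM
    · have := mem_symmDiff.1 (mem_sdiff.1 (hMR (mem_symmDiff.2 (.inr ⟨hx, hxM⟩)))).1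
      exact mem_union_right _ (by tauto)
  have hRP : ∀ x ∈ P, x ∈ R ↔ x ∈ M := fun x hxP => by
    by_contra h
    exact (mem_sdiff.1 (hMR (mem_symmDiff.2 (by tauto)))).2 hxP
  have hcard := card_symmDiff_exchange hP.1 hRP
  have hwR := wSum_symmDiff_exchange w hP.1 hRP
  have hwN := wSum_symmDiff_exchange w hP.symmDiff_comm.1 (R := N) fun _ _ => Iff.rfl
  exact ⟨hq.update hPaug hP, hP.isMatching_symmDiff hN hR hRMN hRP, by omega, by linarith⟩

end Exchange

section AlternatingWalk

variable {n : ℕ} {M N : Finset (Fin n × Fin n)} {a b : ℕ} {u v : ℕ → Fin n}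

def forwardEdges (u v : ℕ → Fin n) (a : ℕ) : Finset (Fin n × Fin n) :=
  (range a).image fun i => (u i, v i)

def backEdges (u v : ℕ → Fin n) (b : ℕ) : Finset (Fin n × Fin n) :=
  (range b).image fun i => (u (i + 1), v i)

def walkEdges (u v : ℕ → Fin n) (a b : ℕ) : Finset (Fin n × Fin n) :=
  forwardEdges u v a ∪ backEdges u v b

/-- The walk `u 0, v 0, u 1, v 1, …` with the `a` edges `(u i, v i)` in `N` and the `b` edges
`(u (i + 1), v i)` in `M`, starting at a left vertex not covered by `M`. -/
structure IsAlternatingWalk (M N : Finset (Fin n × Fin n)) (a b : ℕ) (u v : ℕ → Fin n) :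
    Prop where
  le : b ≤ a
  le_succ : a ≤ b + 1
  injOn_u : ∀ i ≤ b, ∀ j ≤ b, u i = u j → i = j
  injOn_v : ∀ i < a, ∀ j < a, v i = v j → i = j
  forward_mem : ∀ i < a, (u i, v i) ∈ N
  back_mem : ∀ i < b, (u (i + 1), v i) ∈ M
  start : ∀ e ∈ M, e.1 ≠ u 0

structure IsMaximalAlternatingWalk (M N : Finset (Fin n × Fin n)) (a b : ℕ) (u v : ℕ → Fin n) :
    Prop extends IsAlternatingWalk M N a b u v where
  back_closed : ∀ e ∈ M, ∀ i < a, e.2 = v i → i < b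
  forward_closed : ∀ e ∈ N, ∀ i ≤ b, e.1 = u i → i < a

namespace IsAlternatingWalk

theorem lt (W : IsAlternatingWalk M N a b u v) : b < n := by
  simpa using Fintype.card_le_of_injective (fun i : Fin (b + 1) => u i)
    fun i j h => Fin.ext (W.injOn_u i i.is_le j j.is_le h)

theorem forward_not_mem (W : IsAlternatingWalk M N a b u v) (hM : IsMatching n M) {i : ℕ}
    (hi : i < a) : (u i, v i) ∉ M := by
  intro h
  rcases i with _ | i
  · exact W.start _ h rfl
  · have := hM.eq_of_fst_eq h (W.back_mem i (by have := W.le_succ; omega)) rfl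
    have := W.injOn_v (i + 1) hi i (by omega) (congrArg Prod.snd this)
    omega

theorem back_not_mem (W : IsAlternatingWalk M N a b u v) (hN : IsMatching n N) {i : ℕ}
    (hi : i < b) : (u (i + 1), v i) ∉ N := by
  intro h
  have := hN.eq_of_snd_eq h (W.forward_mem i (by have := W.le; omega)) rfl
  have := W.injOn_u (i + 1) (by omega) i (by omega) (congrArg Prod.fst this)
  omega

theorem card_forwardEdges (W : IsAlternatingWalk M N a b u v) : #(forwardEdges u v a) = a := by
  rw [forwardEdges, card_image_of_injOn, card_range]
  intro i hi j hj h
  exact W.injOn_v i (mem_range.1 hi) j (mem_range.1 hj) (congrArg Prod.snd h)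

theorem card_backEdges (W : IsAlternatingWalk M N a b u v) : #(backEdges u v b) = b := by
  rw [backEdges, card_image_of_injOn, card_range]
  intro i hi j hj h
  have := W.le
  exact W.injOn_v i (by simp at hi; omega) j (by simp at hj; omega) (congrArg Prod.snd h)

theorem forwardEdges_subset (W : IsAlternatingWalk M N a b u v) (hM : IsMatching n M) :
    forwardEdges u v a ⊆ N \ M := by
  simp only [forwardEdges, subset_iff, mem_image, mem_range]
  rintro _ ⟨i, hi, rfl⟩
  exact mem_sdiff.2 ⟨W.forward_mem i hi, W.forward_not_mem hM hi⟩

theorem backEdges_subset (W : IsAlternatingWalk M N a b u v) (hN : IsMatching n N) :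
    backEdges u v b ⊆ M \ N := by
  simp only [backEdges, subset_iff, mem_image, mem_range]
  rintro _ ⟨i, hi, rfl⟩
  exact mem_sdiff.2 ⟨W.back_mem i hi, W.back_not_mem hN hi⟩

theorem card_walkEdges_inter (W : IsAlternatingWalk M N a b u v) (hM : IsMatching n M)
    (hN : IsMatching n N) : #(walkEdges u v a b ∩ N) = a ∧ #(walkEdges u v a b ∩ M) = b := by
  have hF := W.forwardEdges_subset hM
  have hB := W.backEdges_subset hN
  rw [walkEdges, union_inter_of_subset_sdiff hF hB, union_comm,
    union_inter_of_subset_sdiff hB hF]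
  exact ⟨W.card_forwardEdges, W.card_backEdges⟩

theorem extend_forward (W : IsAlternatingWalk M N b b u v) (hN : IsMatching n N)
    {e : Fin n × Fin n} (he : e ∈ N) (hu : e.1 = u b) :
    IsAlternatingWalk M N (b + 1) b u (Function.update v b e.2) := by
  have hnew : ∀ i < b, e.2 ≠ v i := fun i hi h => by
    have := W.injOn_u b le_rfl i hi.le
      (hu.symm.trans (congrArg Prod.fst (hN.eq_of_snd_eq he (W.forward_mem i hi) h)))
    omega
  refine ⟨by omega, le_rfl, W.injOn_u, fun i hi j hj h => ?_, fun i hi => ?_,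
    fun i hi => ?_, W.start⟩
  · simp only [Function.update_apply] at h
    split_ifs at h with hib hjb
    · omega
    · exact absurd h (hnew j (by omega))
    · exact absurd h.symm (hnew i (by omega))
    · exact W.injOn_v i (by omega) j (by omega) h
  · rcases Nat.lt_succ_iff_lt_or_eq.1 hi with hi | rfl
    · rw [Function.update_of_ne hi.ne]
      exact W.forward_mem i hi
    · rwa [Function.update_self, ← hu]
  · rw [Function.update_of_ne hi.ne]
    exact W.back_mem i hi

theorem extend_back (W : IsAlternatingWalk M N (b + 1) b u v) (hM : IsMatching n M)
    {e : Fin n × Fin n} (he : e ∈ M) (hv : e.2 = v b) :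
    IsAlternatingWalk M N (b + 1) (b + 1) (Function.update u (b + 1) e.1) v := by
  have hnew : ∀ j ≤ b, e.1 ≠ u j := fun j hj h => by
    rcases j with _ | j
    · exact W.start e he h
    · have := W.injOn_v b (by omega) j (by omega)
        (hv.symm.trans (congrArg Prod.snd (hM.eq_of_fst_eq he (W.back_mem j (by omega)) h)))
      omega
  refine ⟨le_rfl, by omega, fun i hi j hj h => ?_, W.injOn_v, fun i hi => ?_,
    fun i hi => ?_, ?_⟩
  · simp only [Function.update_apply] at h
    split_ifs at h with hib hjb
    · omega
    · exact absurd h (hnew j (by omega))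
    · exact absurd h.symm (hnew i (by omega))
    · exact W.injOn_u i (by omega) j (by omega) h
  · rw [Function.update_of_ne (by omega)]
    exact W.forward_mem i hi
  · rcases Nat.lt_succ_iff_lt_or_eq.1 hi with hi | rfl
    · rw [Function.update_of_ne (by omega)]
      exact W.back_mem i hi
    · rwa [Function.update_self, ← hv]
  · rw [Function.update_of_ne (by omega)]
    exact W.start

theorem exists_isMaximalAlternatingWalk {a b : ℕ} {u v : ℕ → Fin n}
    (W : IsAlternatingWalk M N a b u v)
    (hM : IsMatching n M) (hN : IsMatching n N) :
    ∃ a' b' u' v', a ≤ a' ∧ IsMaximalAlternatingWalk M N a' b' u' v' := by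
  have hbn := W.lt
  by_cases hback : ∀ e ∈ M, ∀ i < a, e.2 = v i → i < b
  · by_cases hfwd : ∀ e ∈ N, ∀ i ≤ b, e.1 = u i → i < a
    · exact ⟨a, b, u, v, le_rfl, W, hback, hfwd⟩
    · push Not at hfwd
      obtain ⟨e, he, i, hi, heu, hai⟩ := hfwd
      have hab : a = b := le_antisymm (by omega) W.le
      rw [show i = b by omega] at heu
      rw [hab] at W
      obtain ⟨a', b', u', v', ha', W'⟩ :=
        exists_isMaximalAlternatingWalk (W.extend_forward hN he heu) hM hN
      exact ⟨a', b', u', v', by omega, W'⟩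
  · push Not at hback
    obtain ⟨e, he, i, hi, hev, hbi⟩ := hback
    have hab : a = b + 1 := by have := W.le_succ; omega
    rw [show i = b by omega] at hev
    rw [hab] at W ⊢
    exact exists_isMaximalAlternatingWalk (W.extend_back hM he hev) hM hN
termination_by 2 * n - (a + b)
decreasing_by all_goals omega

end IsAlternatingWalk

namespace IsMaximalAlternatingWalk

theorem isUnionOfComponents (W : IsMaximalAlternatingWalk M N a b u v) (hM : IsMatching n M)
    (hN : IsMatching n N) :
    IsUnionOfComponents (M ∆ N) (walkEdges u v a b) := by
  have hfwd : ∀ i < a, (u i, v i) ∈ walkEdges u v a b := fun i hi =>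
    mem_union_left _ (mem_image_of_mem _ (mem_range.2 hi))
  have hback : ∀ i < b, (u (i + 1), v i) ∈ walkEdges u v a b := fun i hi =>
    mem_union_right _ (mem_image_of_mem (fun i => (u (i + 1), v i)) (mem_range.2 hi))
  have hvert : ∀ f ∈ walkEdges u v a b,
      (∃ i ≤ b, f.1 = u i) ∧ ∃ i < a, f.2 = v i := by
    have := W.le
    have := W.le_succ
    simp only [walkEdges, forwardEdges, backEdges, mem_union, mem_image, mem_range]
    rintro _ (⟨i, hi, rfl⟩ | ⟨i, hi, rfl⟩)
    exacts [⟨⟨i, by omega, rfl⟩, i, hi, rfl⟩, ⟨⟨i + 1, by omega, rfl⟩, i, by omega, rfl⟩]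
  refine ⟨union_subset ((W.forwardEdges_subset hM).trans symmDiff_subset_sdiff')
    ((W.backEdges_subset hN).trans symmDiff_subset_sdiff), fun e he f hf hef => ?_⟩
  obtain ⟨⟨i, hi, hfi⟩, j, hj, hfj⟩ := hvert f hf
  rcases mem_symmDiff.1 he with ⟨heM, -⟩ | ⟨heN, -⟩ <;> rcases hef with h | h
  · rcases i with _ | i
    · exact absurd (h.trans hfi) (W.start e heM)
    · rw [hM.eq_of_fst_eq heM (W.back_mem i (by omega)) (h.trans hfi)]
      exact hback i (by omega)
  · have hjb := W.back_closed e heM j hj (h.trans hfj)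
    rw [hM.eq_of_snd_eq heM (W.back_mem j hjb) (h.trans hfj)]
    exact hback j hjb
  · have hia := W.forward_closed e heN i hi (h.trans hfi)
    rw [hN.eq_of_fst_eq heN (W.forward_mem i hia) (h.trans hfi)]
    exact hfwd i hia
  · rw [hN.eq_of_snd_eq heN (W.forward_mem j hj) (h.trans hfj)]
    exact hfwd j hj

theorem isAugmentingPath {t : ℕ} (W : IsMaximalAlternatingWalk M N (t + 1) t u v)
    (hM : IsMatching n M) : IsAugmentingPath n M (walkEdges u v (t + 1) t) :=
  ⟨t, u, v, W.injOn_u, fun i hi j hj => W.injOn_v i (by omega) j (by omega),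
    fun _ hi => W.forward_not_mem hM (by omega), W.back_mem, W.start,
    fun e he h => by have := W.back_closed e he t (by omega) h; omega, rfl⟩

end IsMaximalAlternatingWalk

theorem exists_isUnionOfComponents (hM : IsMatching n M) (hN : IsMatching n N)
    (hlt : #M < #N) :
    ∃ P : Finset (Fin n × Fin n), P.Nonempty ∧ IsUnionOfComponents (M ∆ N) P ∧
      (IsAugmentingPath n M P ∧ #(P ∩ N) = #(P ∩ M) + 1 ∨ #(P ∩ N) = #(P ∩ M)) := by
  have hcover : #(M.image Prod.fst) < #(N.image Prod.fst) := by
    rw [card_image_of_injOn fun _ he _ hf h => hN.eq_of_fst_eq he hf h]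
    exact card_image_le.trans_lt hlt
  obtain ⟨x, hxN, hxM⟩ := exists_mem_notMem_of_card_lt_card hcover
  obtain ⟨e₀, he₀, rfl⟩ := mem_image.1 hxN
  have W₀ : IsAlternatingWalk M N 1 0 (fun _ => e₀.1) (fun _ => e₀.2) :=
    ⟨zero_le_one, le_rfl, by omega, by omega, fun _ _ => he₀, by omega,
      fun f hf h => hxM (mem_image.2 ⟨f, hf, h⟩)⟩
  obtain ⟨a, b, u, v, ha, W⟩ := W₀.exists_isMaximalAlternatingWalk hM hN
  refine ⟨walkEdges u v a b, ⟨_, mem_union_left _ (mem_image_of_mem _ (mem_range.2 ha))⟩,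
    W.isUnionOfComponents hM hN, ?_⟩
  obtain ⟨hPN, hPM⟩ := W.card_walkEdges_inter hM hN
  rw [hPN, hPM]
  rcases W.le_succ.eq_or_lt with rfl | h
  · exact .inl ⟨W.isAugmentingPath hM, rfl⟩
  · exact .inr (le_antisymm (by omega) W.le)

end AlternatingWalk

theorem exists_isDisjointAugmentingPaths {n : ℕ} {w : Fin n → Fin n → ℝ}
    {M : Finset (Fin n × Fin n)} (hM : IsMatching n M)
    (hopt : ∀ N, IsMatching n N → #N = #M → wSum n w N ≤ wSum n w M)
    (d : ℕ) {N : Finset (Fin n × Fin n)} (hN : IsMatching n N) (hcard : #N = #M + d) :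
    ∃ p, IsDisjointAugmentingPaths n M (M ∆ N) d p ∧ IsMatching n (applyPaths n M p d) ∧
      #(applyPaths n M p d) = #M + d ∧ wSum n w N ≤ wSum n w (applyPaths n M p d) := by
  rcases d with _ | e
  · exact ⟨fun _ => ∅, ⟨by simp, by simp, by simp⟩, hM, rfl, hopt N hN hcard⟩
  obtain ⟨P, hPne, hP, hPcases⟩ := exists_isUnionOfComponents hM hN (by omega)
  have hlt : #(M ∆ (N ∆ P)) < #(M ∆ N) := by
    rw [hP.symmDiff_symmDiff]
    exact card_lt_card (sdiff_ssubset hP.1 hPne)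
  rcases hPcases with ⟨hPaug, hPcard⟩ | hPbal
  · have hcardNP := card_symmDiff_exchange hP.symmDiff_comm.1 (R := N) fun _ _ => Iff.rfl
    obtain ⟨q, hq, hR, hRcard, hRw⟩ := exists_isDisjointAugmentingPaths hM hopt e
      (hP.isMatching_symmDiff_right hM hN) (by omega)
    rw [hP.symmDiff_symmDiff] at hq
    exact ⟨_, hP.exchange_augmenting hN hPaug hq hR hRcard hRw hPcard⟩
  · obtain ⟨hNP, hNPcard, hNPw⟩ := hP.exchange_balanced hM hN hopt hPbal
    obtain ⟨p, hp, hR, hRcard, hRw⟩ :=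
      exists_isDisjointAugmentingPaths hM hopt (e + 1) hNP (hNPcard.trans hcard)
    rw [hP.symmDiff_symmDiff] at hp
    exact ⟨p, hp.mono sdiff_subset, hR, hRcard, hNPw.trans hRw⟩
termination_by #(M ∆ N)

theorem stmt12_general (n k d : ℕ) (w : Fin n → Fin n → ℝ)
    (Mk Mkd : Finset (Fin n × Fin n))
    (hMk : IsMatching n Mk) (hck : Mk.card = k)
    (hoptk : ∀ N, IsMatching n N → N.card = k → wSum n w N ≤ wSum n w Mk)
    (hMkd : IsMatching n Mkd) (hckd : Mkd.card = k + d)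
    (hoptkd : ∀ N, IsMatching n N → N.card = k + d → wSum n w N ≤ wSum n w Mkd) :
    ∃ p : ℕ → Finset (Fin n × Fin n),
      (∀ i < d, IsAugmentingPath n Mk (p i) ∧ p i ⊆ Mk ∪ Mkd) ∧
      (∀ i < d, ∀ j < d, i ≠ j →
        Disjoint ((p i).image Prod.fst) ((p j).image Prod.fst) ∧
        Disjoint ((p i).image Prod.snd) ((p j).image Prod.snd)) ∧
      IsMatching n (applyPaths n Mk p d) ∧
      (applyPaths n Mk p d).card = k + d ∧
      wSum n w (applyPaths n Mk p d) = wSum n w Mkd := by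
  subst hck
  obtain ⟨p, hp, hmatch, hcard, hw⟩ := exists_isDisjointAugmentingPaths hMk hoptk d hMkd hckd
  exact ⟨p, fun i hi => ⟨hp.isAugmentingPath i hi, (hp.subset i hi).trans symmDiff_subset_union⟩,
    hp.disjoint, hmatch, hcard, le_antisymm (hoptkd _ hmatch hcard) hw⟩

/-- given maximum-weight matchings of cardinalities k and k+d, there exist d
pairwise vertex-disjoint augmenting paths of `M_{k+d}` with respect to `M_k` whose successive
symmetric differences with `M_k` produce a maximum-weight (k+d)-matching. -/
theorem stmt12 (n k d : ℕ) (hd : 1 ≤ d) (w : Fin n → Fin n → ℝ)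
    (Mk Mkd : Finset (Fin n × Fin n))
    (hMk : IsMatching n Mk) (hck : Mk.card = k)
    (hoptk : ∀ N, IsMatching n N → N.card = k → wSum n w N ≤ wSum n w Mk)
    (hMkd : IsMatching n Mkd) (hckd : Mkd.card = k + d)
    (hoptkd : ∀ N, IsMatching n N → N.card = k + d → wSum n w N ≤ wSum n w Mkd) :
    ∃ p : ℕ → Finset (Fin n × Fin n),
      (∀ i < d, IsAugmentingPath n Mk (p i) ∧ p i ⊆ Mk ∪ Mkd) ∧
      (∀ i < d, ∀ j < d, i ≠ j →
        Disjoint ((p i).image Prod.fst) ((p j).image Prod.fst) ∧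
        Disjoint ((p i).image Prod.snd) ((p j).image Prod.snd)) ∧
      IsMatching n (applyPaths n Mk p d) ∧
      (applyPaths n Mk p d).card = k + d ∧
      wSum n w (applyPaths n Mk p d) = wSum n w Mkd :=
  stmt12_general n k d w Mk Mkd hMk hck hoptk hMkd hckd hoptkd
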